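/- (LCD failure mode under selection bias: spurious adjacency.) Let G be the directed mixed graph on node set {C, X, Y, S} whose edges are exactly the directed edges C → X, X → S, and Y → S. Then: no node other than C is an ancestor of C; C ⊥ Y | {X, S}; C ⊥̸ Y | {S}; and C ⊥̸ X | {S}; yet X ∉ an(Y) and Y ∉ an(X). Hence the LCD independence pattern conditioned on the selection node S holds while neither of X and Y is an ancestor of the other. -/
import Mathlib


/-- The three ways an edge of a directed mixed graph can occur on a walk,
when traversed from left to right: `fwd` is a directed edge pointing to the
right node, `bwd` is a directed edge pointing to the left node, and `bi` is
a bidirected edge. -/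
inductive EdgeDir : Type
  | fwd
  | bwd
  | bi
  deriving DecidableEq

/-- The edge has an arrowhead at its right endpoint. -/
def EdgeDir.headAtRight (e : EdgeDir) : Prop := e = .fwd ∨ e = .bi

/-- The edge has an arrowhead at its left endpoint. -/
def EdgeDir.headAtLeft (e : EdgeDir) : Prop := e = .bwd ∨ e = .bi

/-- A directed mixed graph (DMG) on node type `α`: an irreflexive relation of
directed edges and an irreflexive symmetric relation of bidirected edges. -/
structure DMG (α : Type*) where
  dir : α → α → Prop
  bidir : α → α → Prop
  dir_irrefl : ∀ x, ¬ dir x x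
  bidir_irrefl : ∀ x, ¬ bidir x x
  bidir_symm : ∀ x y, bidir x y → bidir y x

namespace DMG

variable {α : Type*}

/-- `G.Anc x y`: there is a directed path (possibly of length zero) from `x` to `y`,
i.e. `x` is an ancestor of `y` (equivalently, `y` is a descendant of `x`). -/
def Anc (G : DMG α) (x y : α) : Prop := Relation.ReflTransGen G.dir x y

/-- Ancestors of a set of nodes. -/
def ancSet (G : DMG α) (S : Set α) : Set α := {x | ∃ y ∈ S, G.Anc x y}

/-- The strongly connected component of `x`: all nodes that are both ancestors
and descendants of `x`. -/
def scc (G : DMG α) (x : α) : Set α := {y | G.Anc y x ∧ G.Anc x y}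

/-- Validity of one step of a walk, from `a` to `b`, traversed as `e`. -/
def StepValid (G : DMG α) (a : α) (e : EdgeDir) (b : α) : Prop :=
  match e with
  | .fwd => G.dir a b
  | .bwd => G.dir b a
  | .bi => G.bidir a b

/-- A walk from `x` to `y` in a DMG `G`: an alternating sequence of `n + 1` nodes
and `n` edges of `G`. -/
structure Walk (G : DMG α) (x y : α) where
  n : ℕ
  node : Fin (n + 1) → α
  edge : Fin n → EdgeDir
  first_eq : node 0 = x
  last_eq : node (Fin.last n) = y
  valid : ∀ i : Fin n, G.StepValid (node i.castSucc) (edge i) (node i.succ)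

namespace Walk

variable {G : DMG α} {x y : α}

/-- A path is a walk all of whose nodes are distinct. -/
def IsPath (w : Walk G x y) : Prop := Function.Injective w.node

/-- The interior node at position `i + 1` of the walk is a collider: both
adjacent edges have an arrowhead at it. -/
def IsColliderAt (w : Walk G x y) (i : ℕ) (h : i + 1 < w.n) : Prop :=
  (w.edge ⟨i, by omega⟩).headAtRight ∧ (w.edge ⟨i + 1, h⟩).headAtLeft

/-- The walk is σ-blocked by the conditioning set `C`. -/
def Blocked (w : Walk G x y) (C : Set α) : Prop :=
  x ∈ C ∨ y ∈ C ∨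
  (∃ (i : ℕ) (h : i + 1 < w.n), w.IsColliderAt i h ∧
    w.node ⟨i + 1, by omega⟩ ∉ G.ancSet C) ∨
  (∃ (i : ℕ) (h : i + 1 < w.n), ¬ w.IsColliderAt i h ∧
    w.node ⟨i + 1, by omega⟩ ∈ C ∧
    ((w.edge ⟨i, by omega⟩ = .bwd ∧
        w.node ⟨i, by omega⟩ ∉ G.scc (w.node ⟨i + 1, by omega⟩)) ∨
     (w.edge ⟨i + 1, h⟩ = .fwd ∧
        w.node ⟨i + 2, by omega⟩ ∉ G.scc (w.node ⟨i + 1, by omega⟩))))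

end Walk

/-- σ-separation: every path between `x` and `y` is σ-blocked by `C`. -/
def sigmaSep (G : DMG α) (x y : α) (C : Set α) : Prop :=
  ∀ w : Walk G x y, w.IsPath → w.Blocked C

/-- A confounding path between `x` and `y`: a path of nonzero length whose first
edge has an arrowhead at `x`, whose last edge has an arrowhead at `y`, and all of
whose non-endpoint nodes are non-colliders. -/
def IsConfoundingPath {G : DMG α} {x y : α} (w : Walk G x y) : Prop :=
  w.IsPath ∧ ∃ h : 0 < w.n,
    (w.edge ⟨0, h⟩).headAtLeft ∧ (w.edge ⟨w.n - 1, by omega⟩).headAtRight ∧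
    ∀ (i : ℕ) (hi : i + 1 < w.n), ¬ w.IsColliderAt i hi

/-- `x` and `y` are confounded in `G` if some confounding path connects them. -/
def Confounded (G : DMG α) (x y : α) : Prop := ∃ w : Walk G x y, IsConfoundingPath w

/-- A directed path from `x` to `y` (of length at least one) all of whose
intermediate nodes avoid `M`. -/
def DirPathAvoiding (G : DMG α) (M : Set α) (x y : α) : Prop :=
  ∃ l : List α, List.Chain G.dir x (l ++ [y]) ∧ ∀ v ∈ l, v ∉ M

/-- A path between `x` and `y` with an arrowhead at `x` and an arrowhead at `y`,
all of whose intermediate nodes lie outside `M` and are non-colliders. -/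
def BidirPathAvoiding (G : DMG α) (M : Set α) (x y : α) : Prop :=
  ∃ w : Walk G x y, w.IsPath ∧ (∃ h : 0 < w.n,
    (w.edge ⟨0, h⟩).headAtLeft ∧ (w.edge ⟨w.n - 1, by omega⟩).headAtRight) ∧
    ∀ (i : ℕ) (hi : i + 1 < w.n),
      w.node ⟨i + 1, by omega⟩ ∉ M ∧ ¬ w.IsColliderAt i hi

/-- The latent projection of `G` onto the node set `M`. -/
def latentProj (G : DMG α) (M : Set α) : DMG M where
  dir a b := a.1 ≠ b.1 ∧ DirPathAvoiding G M a.1 b.1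
  bidir a b := a.1 ≠ b.1 ∧
    (BidirPathAvoiding G M a.1 b.1 ∨ BidirPathAvoiding G M b.1 a.1)
  dir_irrefl := fun _a h => h.1 rfl
  bidir_irrefl := fun _a h => h.1 rfl
  bidir_symm := fun _a _b h => ⟨Ne.symm h.1, Or.symm h.2⟩

end DMG

/-- The node set `{C, X, Y, S}`. -/
inductive N4 : Type
  | C | X | Y | S
  deriving DecidableEq

open N4 in
/-- The DMG with exactly the directed edges `C → X`, `X → S`, `Y → S`. -/
def Glcd : DMG N4 where
  dir a b := (a = C ∧ b = X) ∨ (a = X ∧ b = S) ∨ (a = Y ∧ b = S)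
  bidir _ _ := False
  dir_irrefl := by rintro a (⟨rfl, h⟩ | ⟨rfl, h⟩ | ⟨rfl, h⟩) <;> simp at h
  bidir_irrefl := fun _ h => h
  bidir_symm := fun _ _ h => h.elim


instance : Fintype N4 :=
  ⟨{N4.C, N4.X, N4.Y, N4.S}, fun x => by cases x <;> decide⟩

instance (e : EdgeDir) : Decidable e.headAtLeft := by
  unfold EdgeDir.headAtLeft; infer_instance

instance (e : EdgeDir) : Decidable e.headAtRight := by
  unfold EdgeDir.headAtRight; infer_instance

open N4 in
lemma anc_char {v w : N4} (h : Glcd.Anc v w) :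
    v = w ∨ (v = C ∧ w = X) ∨ (v = C ∧ w = S) ∨ (v = X ∧ w = S) ∨ (v = Y ∧ w = S) := by
  induction h with
  | refl => exact Or.inl rfl
  | tail _ hbc ih =>
    rcases hbc with ⟨rfl, rfl⟩ | ⟨rfl, rfl⟩ | ⟨rfl, rfl⟩ <;>
      rcases ih with rfl | ⟨rfl, h⟩ | ⟨rfl, h⟩ | ⟨rfl, h⟩ | ⟨rfl, h⟩ <;> simp_all

open N4 in
lemma not_anc_S_X : ¬ Glcd.Anc S X := by
  intro h; exact absurd (anc_char h) (by decide)

open N4 in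
lemma step_from_C {e : EdgeDir} {b : N4} (h : Glcd.StepValid C e b) :
    e = .fwd ∧ b = X := by
  cases e with
  | fwd =>
    rcases h with ⟨_, rfl⟩ | ⟨h, _⟩ | ⟨h, _⟩
    exacts [⟨rfl, rfl⟩, absurd h (by decide), absurd h (by decide)]
  | bwd =>
    rcases h with ⟨_, h⟩ | ⟨_, h⟩ | ⟨_, h⟩ <;> exact absurd h (by decide)
  | bi => exact h.elim

open N4 in
lemma step_from_X {e : EdgeDir} {b : N4} (h : Glcd.StepValid X e b) :
    (e = .fwd ∧ b = S) ∨ (e = .bwd ∧ b = C) := by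
  cases e with
  | fwd =>
    rcases h with ⟨h, _⟩ | ⟨_, rfl⟩ | ⟨h, _⟩
    exacts [absurd h (by decide), Or.inl ⟨rfl, rfl⟩, absurd h (by decide)]
  | bwd =>
    rcases h with ⟨rfl, _⟩ | ⟨_, h⟩ | ⟨_, h⟩
    exacts [Or.inr ⟨rfl, rfl⟩, absurd h (by decide), absurd h (by decide)]
  | bi => exact h.elim

open N4 in
lemma step_to_Y {a : N4} {e : EdgeDir} (h : Glcd.StepValid a e Y) :
    e = .bwd ∧ a = S := by
  cases e with
  | fwd =>
    rcases h with ⟨_, h⟩ | ⟨_, h⟩ | ⟨_, h⟩ <;> exact absurd h (by decide)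
  | bwd =>
    rcases h with ⟨h, _⟩ | ⟨h, _⟩ | ⟨_, rfl⟩
    exacts [absurd h (by decide), absurd h (by decide), ⟨rfl, rfl⟩]
  | bi => exact h.elim

open N4 in
/-- The path C → X → S ← Y. -/
def wCY : DMG.Walk Glcd C Y where
  n := 3
  node := ![C, X, S, Y]
  edge := ![.fwd, .fwd, .bwd]
  first_eq := rfl
  last_eq := rfl
  valid := by
    intro i; fin_cases i <;>
      first
        | exact Or.inl ⟨rfl, rfl⟩
        | exact Or.inr (Or.inl ⟨rfl, rfl⟩)
        | exact Or.inr (Or.inr ⟨rfl, rfl⟩)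

open N4 in
/-- The path C → X. -/
def wCX : DMG.Walk Glcd C X where
  n := 1
  node := ![C, X]
  edge := ![.fwd]
  first_eq := rfl
  last_eq := rfl
  valid := by
    intro i; fin_cases i <;>
      first
        | exact Or.inl ⟨rfl, rfl⟩
        | exact Or.inr (Or.inl ⟨rfl, rfl⟩)
        | exact Or.inr (Or.inr ⟨rfl, rfl⟩)

open N4 in
/-- LCD failure mode under selection bias (spurious adjacency):
the LCD pattern conditional on `S` holds but neither of `X` and `Y` is an
ancestor of the other. -/
theorem lcd_failure_spurious_adjacency :
    (∀ v : N4, Glcd.Anc v C → v = C) ∧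
    Glcd.sigmaSep C Y {X, S} ∧
    ¬ Glcd.sigmaSep C Y {S} ∧
    ¬ Glcd.sigmaSep C X {S} ∧
    ¬ Glcd.Anc X Y ∧ ¬ Glcd.Anc Y X := by
  refine ⟨?_, ?_, ?_, ?_, ?_, ?_⟩
  · intro v hv
    rcases anc_char hv with rfl | ⟨rfl, he⟩ | ⟨rfl, he⟩ | ⟨rfl, he⟩ | ⟨rfl, he⟩ <;>
      first | rfl | exact absurd he (by decide)
  · intro w hp
    obtain ⟨n, node, edge, h0, hl, hv⟩ := w
    have hn : n + 1 ≤ 4 := by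
      have h1 := Fintype.card_le_of_injective _ hp
      have h2 : Fintype.card N4 = 4 := rfl
      simpa [h2] using h1
    have hn' : n ≤ 3 := by omega
    interval_cases n
    · exact absurd (h0.symm.trans hl) (by decide)
    · -- length 1: would need an edge between C and Y
      have v0 : Glcd.StepValid C (edge ⟨0, by omega⟩) Y := by
        rw [← h0, ← hl]; exact hv ⟨0, by omega⟩
      exact absurd (step_from_C v0).2 (by decide)
    · -- length 2: C → X, then an edge from X to Y — impossible
      have v0 : Glcd.StepValid C (edge ⟨0, by omega⟩) (node ⟨1, by omega⟩) := by
        rw [← h0]; exact hv ⟨0, by omega⟩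
      obtain ⟨he0, hn1⟩ := step_from_C v0
      have v1 : Glcd.StepValid X (edge ⟨1, by omega⟩) Y := by
        rw [← hn1, ← hl]; exact hv ⟨1, by omega⟩
      rcases step_from_X v1 with ⟨_, h⟩ | ⟨_, h⟩ <;> exact absurd h (by decide)
    · -- length 3: the path must be C → X → S ← Y; it is blocked at X
      have v0 : Glcd.StepValid C (edge ⟨0, by omega⟩) (node ⟨1, by omega⟩) := by
        rw [← h0]; exact hv ⟨0, by omega⟩
      obtain ⟨he0, hn1⟩ := step_from_C v0
      have v1 : Glcd.StepValid X (edge ⟨1, by omega⟩) (node ⟨2, by omega⟩) := by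
        rw [← hn1]; exact hv ⟨1, by omega⟩
      rcases step_from_X v1 with ⟨he1, hn2⟩ | ⟨he1, hn2⟩
      · -- node 2 = S : blocked at the non-collider X with outgoing edge to S
        have hne : ¬ DMG.Walk.IsColliderAt
            ⟨3, node, edge, h0, hl, hv⟩ 0 (by show 0 + 1 < 3; omega) := by
          intro hc
          have h2 : EdgeDir.headAtLeft .fwd := by rw [← he1]; exact hc.2
          exact absurd h2 (by decide)
        have hmem : node ⟨1, by omega⟩ ∈ ({X, S} : Set N4) :=
          Set.mem_insert_iff.mpr (Or.inl hn1)
        have hscc : node ⟨2, by omega⟩ ∉ Glcd.scc (node ⟨1, by omega⟩) := by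
          intro hs
          have hs' : S ∈ Glcd.scc X := by rw [← hn1, ← hn2]; exact hs
          exact not_anc_S_X hs'.1
        exact Or.inr (Or.inr (Or.inr ⟨0, by show 0 + 1 < 3; omega, hne, hmem,
          Or.inr ⟨he1, hscc⟩⟩))
      · -- node 2 = C = node 0 contradicts injectivity
        have : (⟨2, by omega⟩ : Fin 4) = 0 := hp (hn2.trans h0.symm)
        exact absurd this (by decide)
  · intro hsep
    have hb := hsep wCY (by
      unfold DMG.Walk.IsPath Function.Injective; decide)
    rcases hb with h | h | ⟨i, hi, hc, hn⟩ | ⟨i, hi, hnc, hm, hrest⟩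
    · exact (by decide : C ≠ S) h
    · exact (by decide : Y ≠ S) h
    · have hi' : i + 1 < 3 := hi
      have hi2 : i < 2 := by omega
      interval_cases i
      · exact absurd hc.2 (by decide : ¬ EdgeDir.headAtLeft .fwd)
      · exact hn ⟨S, rfl, Relation.ReflTransGen.refl⟩
    · have hi' : i + 1 < 3 := hi
      have hi2 : i < 2 := by omega
      interval_cases i
      · exact (by decide : X ≠ S) hm
      · exact hnc ⟨Or.inl rfl, Or.inl rfl⟩
  · intro hsep
    have hb := hsep wCX (by
      unfold DMG.Walk.IsPath Function.Injective; decide)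
    rcases hb with h | h | ⟨i, hi, _, _⟩ | ⟨i, hi, _⟩
    · exact (by decide : C ≠ S) h
    · exact (by decide : X ≠ S) h
    · have hi' : i + 1 < 1 := hi; omega
    · have hi' : i + 1 < 1 := hi; omega
  · intro h; exact absurd (anc_char h) (by decide)
  · intro h; exact absurd (anc_char h) (by decide)
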